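/- arXiv:1601.03120 — 16 statements merged into one kernel-verified Lean document; each statement's English description precedes it below -/
import Mathlib

section
/- Let R be a unital ring with involution, let a, b ∈ R, and let x be a core inverse of a. Then a is below b in the core partial order (i.e. x a = x b and a x = b x) if and only if b x b = a and x b x = x． -/
/-- `x` is a core inverse of `a` in a unital `*`-ring:
`a x a = a`, `x a x = x`, `(a x)* = a x`, `x a² = a`, `a x² = x`. -/
def IsCoreInverse {R : Type*} [Ring R] [StarRing R] (a x : R) : Prop :=
  a * x * a = a ∧ x * a * x = x ∧ star (a * x) = a * x ∧ x * a ^ 2 = a ∧ a * x ^ 2 = x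

theorem core_le_iff_bxb_and_xbx {R : Type*} [Ring R] [StarRing R] (a b x : R)
    (hx : IsCoreInverse a x) :
    (x * a = x * b ∧ a * x = b * x) ↔ (b * x * b = a ∧ x * b * x = x) := by
  obtain ⟨h1, h2, -, -, -⟩ := hx
  constructor
  · rintro ⟨hxa, hax⟩
    constructor
    · calc b * x * b = a * x * b := by rw [hax]
        _ = a * (x * b) := by rw [mul_assoc]
        _ = a * (x * a) := by rw [hxa]
        _ = a := by rw [← mul_assoc, h1]
    · calc x * b * x = x * a * x := by rw [mul_assoc, ← hax, ← mul_assoc]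
        _ = x := h2
  · rintro ⟨hb, hxbx⟩
    constructor
    · calc x * a = x * (b * x * b) := by rw [hb]
        _ = x * b * x * b := by simp [mul_assoc]
        _ = x * b := by rw [hxbx]
    · calc a * x = b * x * b * x := by rw [hb]
        _ = b * (x * b * x) := by simp [mul_assoc]
        _ = b * x := by rw [hxbx]
end

section
/- Let R be a unital ring with involution, let a, b ∈ R, and let x be a core inverse of a. Then a is below b in the core partial order (i.e. x a = x b and a x = b x) if and only if (b − a) a = 0 and a* (b − a) = 0, i.e. b − a lies in the left annihilator of a and in the right annihilator of a*. -/
theorem core_le_iff_annihilators {R : Type*} [Ring R] [StarRing R] (a b x : R)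
    (hx : IsCoreInverse a x) :
    (x * a = x * b ∧ a * x = b * x) ↔ ((b - a) * a = 0 ∧ star a * (b - a) = 0) := by
  obtain ⟨h1, h2, h3, h4, h5⟩ := hx
  have h4' : x * (a * a) = a := by rw [pow_two] at h4; exact h4
  have h5' : a * (x * x) = x := by rw [pow_two] at h5; exact h5
  -- star a * (a * x) = star a
  have hsa : star a * (a * x) = star a := by
    conv_rhs => rw [← h1]
    rw [star_mul, h3]
  -- x = (x * star x) * star a
  have hxs : x = x * star x * star a := by
    calc x = x * (a * x) := by rw [← mul_assoc, h2]
      _ = x * star (a * x) := by rw [h3]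
      _ = x * star x * star a := by rw [star_mul, mul_assoc]
  constructor
  · rintro ⟨hxa, hax⟩
    constructor
    · have hba : b * a = a * a := by
        calc b * a = b * (x * (a * a)) := by rw [h4']
          _ = b * x * (a * a) := by rw [mul_assoc]
          _ = a * x * (a * a) := by rw [hax]
          _ = a * x * a * a := by rw [← mul_assoc]
          _ = a * a := by rw [h1]
      rw [sub_mul, hba, sub_self]
    · have hsb : star a * b = star a * a := by
        calc star a * b = star a * (a * x) * b := by rw [hsa]
          _ = star a * (a * (x * b)) := by rw [mul_assoc, mul_assoc]
          _ = star a * (a * (x * a)) := by rw [hxa]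
          _ = star a * (a * x * a) := by rw [mul_assoc a x a]
          _ = star a * a := by rw [h1]
      rw [mul_sub, hsb, sub_self]
  · rintro ⟨hl, hr⟩
    have hba : b * a = a * a := sub_eq_zero.mp (by rw [← sub_mul]; exact hl)
    have hsb : star a * b = star a * a := sub_eq_zero.mp (by rw [← mul_sub]; exact hr)
    constructor
    · calc x * a = x * star x * (star a * a) := by
            conv_lhs => rw [hxs]
            rw [mul_assoc]
        _ = x * star x * (star a * b) := by rw [hsb]
        _ = x * b := by rw [← mul_assoc, ← hxs]
    · calc a * x = a * (a * (x * x)) := by rw [h5']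
        _ = a * a * (x * x) := by rw [mul_assoc]
        _ = b * a * (x * x) := by rw [hba]
        _ = b * (a * (x * x)) := by rw [mul_assoc]
        _ = b * x := by rw [h5']
end

section
/- Let R be a unital ring with involution, let a, b ∈ R, and let x be a core inverse of a. Then a is below b in the core partial order (i.e. x a = x b and a x = b x) if and only if (b − a)(a x) = 0 and (a x)(b − a) = 0, i.e. b − a lies in the left annihilator and in the right annihilator of the idempotent a x. -/
theorem core_le_iff_annihilates_ax {R : Type*} [Ring R] [StarRing R] (a b x : R)
    (hx : IsCoreInverse a x) :
    (x * a = x * b ∧ a * x = b * x) ↔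
      ((b - a) * (a * x) = 0 ∧ (a * x) * (b - a) = 0) := by
  obtain ⟨h1, h2, h3, h4, h5⟩ := hx
  rw [pow_two] at h4
  rw [pow_two] at h5
  constructor
  · rintro ⟨hxa, hax⟩
    constructor
    · have hB : b * (a * x) = a * (a * x) := by
        calc b * (a * x) = b * ((x * (a * a)) * x) := by rw [h4]
          _ = (b * x) * (a * (a * x)) := by simp only [mul_assoc]
          _ = (a * x) * (a * (a * x)) := by rw [← hax]
          _ = ((a * x) * a) * (a * x) := by simp only [mul_assoc]
          _ = a * (a * x) := by rw [h1]
      rw [sub_mul, hB, sub_self]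
    · have hA : (a * x) * b = (a * x) * a := by
        calc (a * x) * b = a * (x * b) := by rw [mul_assoc]
          _ = a * (x * a) := by rw [← hxa]
          _ = (a * x) * a := by rw [mul_assoc]
      rw [mul_sub, hA, sub_self]
  · rintro ⟨hL, hR⟩
    have hB : b * (a * x) = a * (a * x) := by
      have := sub_eq_zero.mpr (rfl : (b - a) * (a * x) = (b - a) * (a * x))
      have h := hL
      rw [sub_mul, sub_eq_zero] at h
      exact h
    have hA : (a * x) * b = a := by
      rw [mul_sub, sub_eq_zero] at hR
      rw [hR]; exact h1
    constructor
    · calc x * a = x * ((a * x) * b) := by rw [hA]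
        _ = (x * a * x) * b := by simp only [mul_assoc]
        _ = x * b := by rw [h2]
    · calc a * x = a * (a * (x * x)) := by rw [h5]
        _ = (a * (a * x)) * x := by simp only [mul_assoc]
        _ = (b * (a * x)) * x := by rw [hB]
        _ = b * (a * (x * x)) := by simp only [mul_assoc]
        _ = b * x := by rw [h5]
end

section
/- Let R be a unital ring with involution, let a, b ∈ R, and let x be a core inverse of a. Then a is below b in the core partial order (i.e. x a = x b and a x = b x) if and only if there exists a self-adjoint idempotent p ∈ R (p² = p = p*) such that a = p b, a p = b p, and a R = p R (i.e. there exist s, t ∈ R with a = p s and p = a t). -/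
theorem core_le_iff_selfadjoint_idempotent_range {R : Type*} [Ring R] [StarRing R] (a b x : R)
    (hx : IsCoreInverse a x) :
    (x * a = x * b ∧ a * x = b * x) ↔
      (∃ p : R, p ^ 2 = p ∧ star p = p ∧ a = p * b ∧ a * p = b * p ∧
        (∃ s : R, a = p * s) ∧ (∃ t : R, p = a * t)) := by
  obtain ⟨h1, h2, h3, h4, h5⟩ := hx
  rw [sq] at h4
  rw [sq] at h5
  constructor
  · rintro ⟨hxa, hax⟩
    have hpb : a * x * b = a := by
      calc a * x * b = a * (a * (x * x)) * b := by rw [h5]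
        _ = a * a * x * (x * b) := by noncomm_ring
        _ = a * a * x * (x * a) := by rw [← hxa]
        _ = a * (a * (x * x)) * a := by noncomm_ring
        _ = a * x * a := by rw [h5]
        _ = a := h1
    have hba : b * a = a * a := by
      calc b * a = b * (x * (a * a)) := by rw [h4]
        _ = b * x * a * a := by noncomm_ring
        _ = a * x * a * a := by rw [← hax]
        _ = a * a := by rw [h1]
    have hbp : b * (a * x) = a * (a * x) := by
      calc b * (a * x) = b * a * x := by rw [mul_assoc]
        _ = a * a * x := by rw [hba]
        _ = a * (a * x) := by rw [mul_assoc]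
    refine ⟨a * x, ?_, h3, hpb.symm, ?_, ⟨a, h1.symm⟩, ⟨x, rfl⟩⟩
    · rw [sq]
      calc a * x * (a * x) = a * x * a * x := by noncomm_ring
        _ = a * x := by rw [h1]
    · exact hbp.symm
  · rintro ⟨p, hp2, hps, hab, hap, ⟨s, hs⟩, ⟨t, ht⟩⟩
    rw [sq] at hp2
    have hpa : p * a = a := by
      calc p * a = p * (p * s) := by rw [← hs]
        _ = p * p * s := by rw [mul_assoc]
        _ = p * s := by rw [hp2]
        _ = a := hs.symm
    have haa : a * a = b * a := by
      calc a * a = a * (p * a) := by rw [hpa]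
        _ = a * p * a := by rw [mul_assoc]
        _ = b * p * a := by rw [hap]
        _ = b * (p * a) := by rw [mul_assoc]
        _ = b * a := by rw [hpa]
    have hax : a * x = b * x := by
      calc a * x = a * (a * (x * x)) := by rw [h5]
        _ = a * a * (x * x) := by noncomm_ring
        _ = b * a * (x * x) := by rw [haa]
        _ = b * (a * (x * x)) := by noncomm_ring
        _ = b * x := by rw [h5]
    -- a * x * p = a * x
    have hpax : p * (a * x) = a * x := by rw [← mul_assoc, hpa]
    have haxp : a * x * p = a * x := by
      have := congrArg star hpax
      rwa [star_mul, h3, hps] at this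
    have hxp : x * p = x := by
      calc x * p = x * a * x * p := by rw [h2]
        _ = x * (a * x * p) := by noncomm_ring
        _ = x * (a * x) := by rw [haxp]
        _ = x := by rw [← mul_assoc, h2]
    have hxa : x * a = x * b := by
      calc x * a = x * (p * b) := by rw [← hab]
        _ = x * p * b := by rw [mul_assoc]
        _ = x * b := by rw [hxp]
    exact ⟨hxa, hax⟩
end

section
/- Let R be a unital ring with involution, let a, b ∈ R, and let x be a core inverse of a. Then a is below b in the core partial order (i.e. x a = x b and a x = b x) if and only if there exists a self-adjoint idempotent p ∈ R (p² = p = p*) such that a = p b and a p = b p. -/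
theorem core_le_iff_selfadjoint_idempotent {R : Type*} [Ring R] [StarRing R] (a b x : R)
    (hx : IsCoreInverse a x) :
    (x * a = x * b ∧ a * x = b * x) ↔
      (∃ p : R, p ^ 2 = p ∧ star p = p ∧ a = p * b ∧ a * p = b * p) := by
  obtain ⟨h1, h2, h3, h4, h5⟩ := hx
  constructor
  · rintro ⟨hxa, hax⟩
    refine ⟨a * x, ?_, h3, ?_, ?_⟩
    · calc (a * x) ^ 2 = (a * x * a) * x := by noncomm_ring
        _ = a * x := by rw [h1]
    · calc a = a * x * a := h1.symm
        _ = a * (x * a) := by noncomm_ring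
        _ = a * (x * b) := by rw [hxa]
        _ = (a * x) * b := by noncomm_ring
    · have hbxa : b * x * a = a := by rw [← hax, h1]
      calc a * (a * x) = (b * x * a) * (a * x) := by rw [hbxa]
        _ = b * (x * a ^ 2) * x := by noncomm_ring
        _ = b * a * x := by rw [h4]
        _ = b * (a * x) := by noncomm_ring
  · rintro ⟨p, hp2, hps, hab, hap⟩
    -- p * a = a
    have hpa : p * a = a := by
      calc p * a = p * (p * b) := by rw [hab]
        _ = p ^ 2 * b := by noncomm_ring
        _ = p * b := by rw [hp2]
        _ = a := hab.symm
    -- p * x = x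
    have hpx : p * x = x := by
      calc p * x = p * (a * x ^ 2) := by rw [h5]
        _ = (p * a) * x ^ 2 := by noncomm_ring
        _ = a * x ^ 2 := by rw [hpa]
        _ = x := h5
    -- a * x * p = a * x
    have haxp : a * x * p = a * x := by
      have h1' : star a = star a * p := by
        calc star a = star (p * a) := by rw [hpa]
          _ = star a * star p := by rw [star_mul]
          _ = star a * p := by rw [hps]
      calc a * x * p = star (a * x) * p := by rw [h3]
        _ = star x * star a * p := by rw [star_mul]
        _ = star x * (star a * p) := by noncomm_ring
        _ = star x * star a := by rw [← h1']
        _ = star (a * x) := by rw [star_mul]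
        _ = a * x := h3
    -- x * p = x
    have hxp : x * p = x := by
      calc x * p = (x * a * x) * p := by rw [h2]
        _ = x * (a * x * p) := by noncomm_ring
        _ = x * (a * x) := by rw [haxp]
        _ = x * a * x := by noncomm_ring
        _ = x := h2
    have hpb : p * b = p * a := by rw [hpa, hab]
    have hbp : b * p = a * p := hap.symm
    constructor
    · calc x * a = x * (p * b) := by rw [← hab]
        _ = (x * p) * b := by noncomm_ring
        _ = x * b := by rw [hxp]
    · calc a * x = a * (p * x) := by rw [hpx]
        _ = (a * p) * x := by noncomm_ring
        _ = (b * p) * x := by rw [hap]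
        _ = b * (p * x) := by noncomm_ring
        _ = b * x := by rw [hpx]
end

section
/- Let R be a unital ring with involution, let a, b ∈ R, let x be a core inverse of a and y a core inverse of b. If a is below b in the core partial order (i.e. x a = x b and a x = b x), then b x = a y and x b = y a. -/
theorem core_le_mixed_products {R : Type*} [Ring R] [StarRing R] (a b x y : R)
    (hx : IsCoreInverse a x) (hy : IsCoreInverse b y)
    (hle : x * a = x * b ∧ a * x = b * x) :
    b * x = a * y ∧ x * b = y * a := by
  obtain ⟨ha1, ha2, ha3, ha4, ha5⟩ := hx
  obtain ⟨hb1, hb2, hb3, hb4, hb5⟩ := hy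
  obtain ⟨he1, he2⟩ := hle
  rw [pow_two] at ha4 ha5 hb4 hb5
  -- b * x * a = a
  have hA : b * x * a = a := by rw [← he2]; exact ha1
  -- a * x * b = a
  have hB : a * x * b = a := by rw [mul_assoc, ← he1, ← mul_assoc]; exact ha1
  -- b * y * a = a
  have hD : b * y * a = a := by
    calc b * y * a = b * y * (b * x * a) := by rw [hA]
      _ = (b * y * b) * (x * a) := by noncomm_ring
      _ = b * x * a := by rw [hb1, ← mul_assoc]
      _ = a := hA
  -- a * y = a * x
  have hE : a * y = a * x := by
    have h1 : a * y = (a * x) * (b * y) := by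
      calc a * y = (a * x * b) * y := by rw [hB]
        _ = (a * x) * (b * y) := by rw [mul_assoc]
    have h2 : star (a * y) = a * x := by
      rw [h1, star_mul, hb3, ha3]
      calc b * y * (a * x) = b * y * (b * x) := by rw [he2]
        _ = (b * y * b) * x := by rw [← mul_assoc, mul_assoc]
        _ = b * x := by rw [hb1]
        _ = a * x := by rw [he2]
    calc a * y = star (star (a * y)) := (star_star _).symm
      _ = star (a * x) := by rw [h2]
      _ = a * x := ha3
  -- y * b * x = x
  have hF : y * b * x = x := by
    calc y * b * x = y * b * (a * (x * x)) := by rw [ha5]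
      _ = (y * b * a) * (x * x) := by noncomm_ring
      _ = a * (x * x) := by
          rw [show y * b * a = a from ?_]
          · calc y * b * a = y * b * (b * x * a) := by rw [hA]
              _ = (y * (b * b)) * (x * a) := by noncomm_ring
              _ = b * (x * a) := by rw [hb4]
              _ = a := by rw [← mul_assoc, hA]
      _ = x := ha5
  constructor
  · rw [← he2, hE]
  · calc x * b = x * a := he1.symm
      _ = y * b * x * a := by rw [hF]
      _ = y * (b * x * a) := by noncomm_ring
      _ = y * a := by rw [hA]
end

section
/- Let R be a unital ring with involution, let a, b ∈ R, let x be a core inverse of a and y a core inverse of b. If a is below b in the core partial order (i.e. x a = x b and a x = b x), then y b x = x b y = x b x = x and y a x = x a y = y a y = x. -/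
theorem core_le_triple_products {R : Type*} [Ring R] [StarRing R] (a b x y : R)
    (hx : IsCoreInverse a x) (hy : IsCoreInverse b y)
    (hle : x * a = x * b ∧ a * x = b * x) :
    (y * b * x = x ∧ x * b * y = x ∧ x * b * x = x) ∧
    (y * a * x = x ∧ x * a * y = x ∧ y * a * y = x) := by
  obtain ⟨ha1, ha2, ha3, ha4, ha5⟩ := hx
  obtain ⟨hb1, hb2, hb3, hb4, hb5⟩ := hy
  obtain ⟨h1, h2⟩ := hle
  have haxx : a * (x * x) = x := by rw [← pow_two]; exact ha5
  have e2 : b * x * a = a := by rw [← h2, ha1]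
  have e3 : b * (x * a * (x * x)) = x := by
    calc b * (x * a * (x * x)) = (b * x * a) * (x * x) := by noncomm_ring
    _ = a * (x * x) := by rw [e2]
    _ = x := haxx
  have key1 : y * b * x = x := by
    calc y * b * x = y * b * (b * (x * a * (x * x))) := by rw [e3]
    _ = (y * b ^ 2) * (x * a * (x * x)) := by noncomm_ring
    _ = b * (x * a * (x * x)) := by rw [hb4]
    _ = x := e3
  have e1 : a * x * b = a := by rw [mul_assoc, ← h1, ← mul_assoc, ha1]
  have hqp : b * y * (b * x) = b * x := by
    calc b * y * (b * x) = (b * y * b) * x := by noncomm_ring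
    _ = b * x := by rw [hb1]
  have hsbx : star (b * x) = b * x := by rw [← h2]; exact ha3
  have hpq : b * x * (b * y) = b * x := by
    have h := congrArg star hqp
    rwa [star_mul, hsbx, hb3] at h
  have hay : a * y = a * x := by
    calc a * y = (a * x * b) * y := by rw [e1]
    _ = a * x * (b * y) := by noncomm_ring
    _ = b * x * (b * y) := by rw [h2]
    _ = b * x := hpq
    _ = a * x := h2.symm
  have g3 : x * b * x = x := by rw [← h1, ha2]
  have g4 : y * a * x = x := by rw [mul_assoc, h2, ← mul_assoc, key1]
  have g2 : x * b * y = x := by rw [← h1, mul_assoc, hay, ← mul_assoc, ha2]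
  have g5 : x * a * y = x := by rw [h1]; exact g2
  have g6 : y * a * y = x := by rw [mul_assoc, hay, ← mul_assoc, g4]
  exact ⟨⟨key1, g2, g3⟩, ⟨g4, g5, g6⟩⟩
end

section
/- Let R be a unital ring with involution, let a, b ∈ R, let x be a core inverse of a and y a core inverse of b. Then a is below b in the core partial order (i.e. x a = x b and a x = b x) if and only if x b = y a, b x = a y, and a y a = a. -/
theorem core_le_iff_mixed {R : Type*} [Ring R] [StarRing R] (a b x y : R)
    (hx : IsCoreInverse a x) (hy : IsCoreInverse b y) :
    (x * a = x * b ∧ a * x = b * x) ↔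
      (x * b = y * a ∧ b * x = a * y ∧ a * y * a = a) := by
  obtain ⟨hx1, hx2, hx3, hx4, hx5⟩ := hx
  obtain ⟨hy1, hy2, hy3, hy4, hy5⟩ := hy
  constructor
  · rintro ⟨h1, h2⟩
    have hA : a * x * b = a := by rw [mul_assoc, ← h1, ← mul_assoc, hx1]
    have hB : b * x * a = a := by rw [← h2, hx1]
    have hC : a * y = a * x := by
      calc a * y = a * x * b * y := by rw [hA]
        _ = a * x * (b * y) := by rw [mul_assoc]
        _ = star (a * x) * star (b * y) := by rw [hx3, hy3]
        _ = star (b * y * (a * x)) := (star_mul _ _).symm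
        _ = star (b * y * (b * x)) := by rw [h2]
        _ = star (b * y * b * x) := by rw [mul_assoc (b * y)]
        _ = star (b * x) := by rw [hy1]
        _ = star (a * x) := by rw [← h2]
        _ = a * x := hx3
    have hbx : b * x = a * y := by rw [hC, h2]
    have haya : a * y * a = a := by rw [hC, hx1]
    have hD : y * b * a = a := by
      calc y * b * a = y * b * (b * x * a) := by rw [hB]
        _ = y * b ^ 2 * x * a := by noncomm_ring
        _ = b * x * a := by rw [hy4]
        _ = a := hB
    have hxa : x * a = a * x ^ 2 * a := by rw [hx5]
    have hya : y * a = x * a := by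
      calc y * a = y * (b * x * a) := by rw [hB]
        _ = y * b * (x * a) := by noncomm_ring
        _ = y * b * (a * x ^ 2 * a) := by rw [← hxa]
        _ = y * b * a * (x ^ 2 * a) := by noncomm_ring
        _ = a * (x ^ 2 * a) := by rw [hD]
        _ = a * x ^ 2 * a := by rw [mul_assoc]
        _ = x * a := hxa.symm
    refine ⟨?_, hbx, haya⟩
    rw [hya]
    exact h1.symm
  · rintro ⟨g1, g2, g3⟩
    have hA' : a * x * b = a := by rw [mul_assoc, g1, ← mul_assoc, g3]
    have h1 : x * a = x * b := by
      calc x * a = x * (a * x * b) := by rw [hA']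
        _ = x * a * x * b := by noncomm_ring
        _ = x * b := by rw [hx2]
    have h2 : a * x = b * x := by
      calc a * x = a * x * b * x := by rw [hA']
        _ = a * x * (b * x) := by rw [mul_assoc]
        _ = a * x * (a * y) := by rw [g2]
        _ = a * x * a * y := by rw [mul_assoc (a * x)]
        _ = a * y := by rw [hx1]
        _ = b * x := g2.symm
    exact ⟨h1, h2⟩
end

section
/- Let R be a unital ring with involution, let a, b ∈ R, let x be a core inverse of a and y a core inverse of b. If a is below b in the core partial order (i.e. x a = x b and a x = b x), then y x = x², and x² is a core inverse of a b, a core inverse of a², and a core inverse of b a (so the reverse order law (a b)⊛ = b⊛ a⊛ = (a⊛)² = (a²)⊛ = (b a)⊛ holds). -/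
theorem core_le_reverse_order_law {R : Type*} [Ring R] [StarRing R] (a b x y : R)
    (hx : IsCoreInverse a x) (hy : IsCoreInverse b y)
    (hle : x * a = x * b ∧ a * x = b * x) :
    y * x = x ^ 2 ∧ IsCoreInverse (a * b) (x ^ 2) ∧ IsCoreInverse (a ^ 2) (x ^ 2) ∧
      IsCoreInverse (b * a) (x ^ 2) := by
  obtain ⟨hx1, hx2, hx3, hx4, hx5⟩ := hx
  obtain ⟨hy1, hy2, hy3, hy4, hy5⟩ := hy
  obtain ⟨hle1, hle2⟩ := hle
  simp only [IsCoreInverse, pow_two] at *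
  -- basic facts
  have hbxx : b * (x * x) = x := by
    calc b * (x * x) = b * x * x := by noncomm_ring
      _ = a * x * x := by rw [hle2]
      _ = a * (x * x) := by noncomm_ring
      _ = x := hx5
  have hba : b * a = a * a := by
    calc b * a = b * (x * (a * a)) := by rw [hx4]
      _ = (b * x) * (a * a) := by noncomm_ring
      _ = (a * x) * (a * a) := by rw [hle2]
      _ = a * (x * (a * a)) := by noncomm_ring
      _ = a * a := by rw [hx4]
  have hybx : y * (b * x) = x := by
    calc y * (b * x) = y * (b * (b * (x * x))) := by rw [hbxx]
      _ = (y * (b * b)) * (x * x) := by noncomm_ring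
      _ = b * (x * x) := by rw [hy4]
      _ = x := hbxx
  have hyx : y * x = x * x := by
    calc y * x = y * (b * (x * x)) := by rw [hbxx]
      _ = (y * (b * x)) * x := by noncomm_ring
      _ = x * x := by rw [hybx]
  -- core inverse of a*a
  have hA1 : a * a * (x * x) * (a * a) = a * a := by
    calc a * a * (x * x) * (a * a) = (a * (a * (x * x))) * (a * a) := by noncomm_ring
      _ = (a * x) * (a * a) := by rw [hx5]
      _ = (a * x * a) * a := by noncomm_ring
      _ = a * a := by rw [hx1]
  have hA2 : x * x * (a * a) * (x * x) = x * x := by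
    calc x * x * (a * a) * (x * x) = (x * (x * (a * a))) * (x * x) := by noncomm_ring
      _ = (x * a) * (x * x) := by rw [hx4]
      _ = (x * a * x) * x := by noncomm_ring
      _ = x * x := by rw [hx2]
  have haaxx : a * a * (x * x) = a * x := by
    calc a * a * (x * x) = a * (a * (x * x)) := by noncomm_ring
      _ = a * x := by rw [hx5]
  have hA3 : star (a * a * (x * x)) = a * a * (x * x) := by rw [haaxx]; exact hx3
  have hA4 : x * x * (a * a * (a * a)) = a * a := by
    calc x * x * (a * a * (a * a)) = (x * (x * (a * a))) * (a * a) := by noncomm_ring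
      _ = (x * a) * (a * a) := by rw [hx4]
      _ = (x * (a * a)) * a := by noncomm_ring
      _ = a * a := by rw [hx4]
  have hA5 : a * a * (x * x * (x * x)) = x * x := by
    calc a * a * (x * x * (x * x)) = (a * (a * (x * x))) * (x * x) := by noncomm_ring
      _ = (a * x) * (x * x) := by rw [hx5]
      _ = (a * (x * x)) * x := by noncomm_ring
      _ = x * x := by rw [hx5]
  -- core inverse of a*b
  have habz : a * b * (x * x) = a * x := by
    calc a * b * (x * x) = a * (b * (x * x)) := by noncomm_ring
      _ = a * x := by rw [hbxx]
  have hB1 : a * b * (x * x) * (a * b) = a * b := by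
    calc a * b * (x * x) * (a * b) = (a * (b * (x * x))) * (a * b) := by noncomm_ring
      _ = (a * x) * (a * b) := by rw [hbxx]
      _ = (a * x * a) * b := by noncomm_ring
      _ = a * b := by rw [hx1]
  have hB2 : x * x * (a * b) * (x * x) = x * x := by
    calc x * x * (a * b) * (x * x) = x * x * (a * (b * (x * x))) := by noncomm_ring
      _ = x * x * (a * x) := by rw [hbxx]
      _ = x * (x * a * x) := by noncomm_ring
      _ = x * x := by rw [hx2]
  have hB3 : star (a * b * (x * x)) = a * b * (x * x) := by rw [habz]; exact hx3
  have hB4 : x * x * (a * b * (a * b)) = a * b := by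
    calc x * x * (a * b * (a * b)) = x * x * (a * (b * a) * b) := by noncomm_ring
      _ = x * x * (a * (a * a) * b) := by rw [hba]
      _ = (x * (x * (a * a))) * (a * b) := by noncomm_ring
      _ = (x * a) * (a * b) := by rw [hx4]
      _ = (x * (a * a)) * b := by noncomm_ring
      _ = a * b := by rw [hx4]
  have hB5 : a * b * (x * x * (x * x)) = x * x := by
    calc a * b * (x * x * (x * x)) = (a * (b * (x * x))) * (x * x) := by noncomm_ring
      _ = (a * x) * (x * x) := by rw [hbxx]
      _ = (a * (x * x)) * x := by noncomm_ring
      _ = x * x := by rw [hx5]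
  refine ⟨hyx, ⟨hB1, hB2, hB3, hB4, hB5⟩, ⟨hA1, hA2, hA3, hA4, hA5⟩, ?_⟩
  rw [hba]
  exact ⟨hA1, hA2, hA3, hA4, hA5⟩
end

section
/- Let R be a unital ring with involution, let a, b ∈ R, let x be a core inverse of a and y a core inverse of b. If a is below b in the core partial order (i.e. x a = x b and a x = b x) and a is EP witnessed by x (i.e. moreover a x = x a), then a b is an EP element: x² is a core inverse of a b and x² (a b) = (a b) x². -/
theorem core_le_EP_product {R : Type*} [Ring R] [StarRing R] (a b x y : R)
    (hx : IsCoreInverse a x) (hy : IsCoreInverse b y)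
    (hle : x * a = x * b ∧ a * x = b * x) (hEP : a * x = x * a) :
    IsCoreInverse (a * b) (x ^ 2) ∧ x ^ 2 * (a * b) = (a * b) * x ^ 2 := by
  obtain ⟨h1, h2, h3, h4, h5⟩ := hx
  have h4' : x * (a * a) = a := by rw [← pow_two]; exact h4
  have h5' : a * (x * x) = x := by rw [← pow_two]; exact h5
  -- a * a * x = a
  have h6 : a * a * x = a := by rw [mul_assoc, hEP, ← mul_assoc, h1]
  -- a * x * b = a
  have h7 : a * x * b = a := by rw [mul_assoc, ← hle.1, ← mul_assoc, h1]
  -- a * b = a * a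
  have hab : a * b = a * a := by
    calc a * b = a * a * x * b := by rw [h6]
    _ = a * (a * x * b) := by rw [mul_assoc, mul_assoc, mul_assoc]
    _ = a * a := by rw [h7]
  have h4a : x * a * a = a := by rw [mul_assoc, h4']
  have h5a : a * x * x = x := by rw [mul_assoc, h5']
  -- a * a * (x * x) = a * x
  have hA1 : a * a * (x * x) = a * x := by
    rw [mul_assoc, h5']
  -- x * x * (a * a) = x * a
  have hA2 : x * x * (a * a) = x * a := by
    calc x * x * (a * a) = x * (x * a) * a := by rw [mul_assoc, mul_assoc, mul_assoc]
    _ = x * (a * x) * a := by rw [← hEP]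
    _ = x * a * x * a := by rw [← mul_assoc]
    _ = x * a := by rw [h2]
  constructor
  · refine ⟨?_, ?_, ?_, ?_, ?_⟩
    · simp only [hab, pow_two]
      rw [hA1, ← mul_assoc, h1]
    · simp only [hab, pow_two]
      rw [hA2, mul_assoc, h5']
    · simp only [hab, pow_two]
      rw [hA1, h3]
    · simp only [hab, pow_two]
      rw [← mul_assoc, hA2, ← mul_assoc, h4a]
    · simp only [hab, pow_two]
      rw [← mul_assoc, hA1, ← mul_assoc, h5a]
  · simp only [hab, pow_two]
    rw [hA2, hA1, hEP]
end

section
/- Let R be a unital ring with involution, let a, b ∈ R, and let x be a core inverse of a. Then a is below b in the core partial order (i.e. x a = x b and a x = b x) if and only if a is below b in the left star partial order (a* a = a* b and there exists s ∈ R with a = b s) and b x b = a. -/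
theorem core_le_iff_leftstar_and_bxb {R : Type*} [Ring R] [StarRing R] (a b x : R)
    (hx : IsCoreInverse a x) :
    (x * a = x * b ∧ a * x = b * x) ↔
      ((star a * a = star a * b ∧ ∃ s : R, a = b * s) ∧ b * x * b = a) := by
  obtain ⟨h1, h2, h3, h4, h5⟩ := hx
  constructor
  · rintro ⟨hxa, hax⟩
    have haxb : a * x * b = a := by
      calc a * x * b = a * (x * b) := by rw [mul_assoc]
        _ = a * (x * a) := by rw [← hxa]
        _ = a * x * a := by rw [mul_assoc]
        _ = a := h1
    have hstar : star a = star a * (a * x) := by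
      conv_lhs => rw [← h1]
      rw [star_mul, h3]
    refine ⟨⟨?_, ⟨x * a, ?_⟩⟩, ?_⟩
    · calc star a * a = star a * (a * x) * a := by rw [← hstar]
        _ = star a * (a * x * a) := by simp only [mul_assoc]
        _ = star a * (a * x * b) := by rw [h1, haxb]
        _ = star a * (a * x) * b := by simp only [mul_assoc]
        _ = star a * b := by rw [← hstar]
    · calc a = a * x * a := h1.symm
        _ = b * x * a := by rw [hax]
        _ = b * (x * a) := by rw [mul_assoc]
    · rw [← hax]; exact haxb
  · rintro ⟨⟨hst, ⟨s, hs⟩⟩, hb⟩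
    have hxx : x = x * (star x * star a) := by
      calc x = x * a * x := h2.symm
        _ = x * (a * x) := by rw [mul_assoc]
        _ = x * star (a * x) := by rw [h3]
        _ = x * (star x * star a) := by rw [star_mul]
    have hxaxb : x * a = x * b := by
      calc x * a = x * (star x * star a) * a := by rw [← hxx]
        _ = x * (star x * (star a * a)) := by simp only [mul_assoc]
        _ = x * (star x * (star a * b)) := by rw [hst]
        _ = x * (star x * star a) * b := by simp only [mul_assoc]
        _ = x * b := by rw [← hxx]
    refine ⟨hxaxb, ?_⟩
    calc a * x = b * x * b * x := by rw [hb]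
      _ = b * (x * b * x) := by simp only [mul_assoc]
      _ = b * (x * a * x) := by rw [← hxaxb]
      _ = b * x := by rw [h2]
end

section
/- Let R be a unital ring with involution, let a, b ∈ R, let x be a core inverse of a and y a core inverse of b. Then a is below b in the core partial order (i.e. x a = x b and a x = b x) if and only if a is below b in the left star partial order (a* a = a* b and there exists s ∈ R with a = b s) and y a x = x. -/
theorem core_le_iff_leftstar_and_yax {R : Type*} [Ring R] [StarRing R] (a b x y : R)
    (hx : IsCoreInverse a x) (hy : IsCoreInverse b y) :
    (x * a = x * b ∧ a * x = b * x) ↔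
      ((star a * a = star a * b ∧ ∃ s : R, a = b * s) ∧ y * a * x = x) := by
  obtain ⟨ha1, ha2, ha3, ha4, ha5⟩ := hx
  obtain ⟨hb1, hb2, hb3, hb4, hb5⟩ := hy
  rw [pow_two, ← mul_assoc] at ha4 ha5 hb4 hb5
  have hstar : star a * (a * x) = star a := by
    calc star a * (a * x) = star a * star (a * x) := by rw [ha3]
      _ = star (a * x * a) := (star_mul _ _).symm
      _ = star a := by rw [ha1]
  constructor
  · rintro ⟨hxa, hax⟩
    have haxb : a * x * b = a := by
      rw [mul_assoc, ← hxa, ← mul_assoc, ha1]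
    have h6 : b * x * x = x := by rw [← hax]; exact ha5
    refine ⟨⟨?_, ⟨x * a, ?_⟩⟩, ?_⟩
    · calc star a * a = star a * (a * x * b) := by rw [haxb]
        _ = star a * (a * x) * b := (mul_assoc _ _ _).symm
        _ = star a * b := by rw [hstar]
    · rw [← mul_assoc, ← hax, ha1]
    · calc y * a * x = y * (a * x) := mul_assoc _ _ _
        _ = y * (b * x) := by rw [hax]
        _ = y * b * x := (mul_assoc _ _ _).symm
        _ = y * b * (b * x * x) := by rw [h6]
        _ = y * b * (b * x) * x := (mul_assoc _ _ _).symm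
        _ = y * b * b * x * x := by rw [← mul_assoc (y * b) b x]
        _ = b * x * x := by rw [hb4]
        _ = x := h6
  · rintro ⟨⟨hsa, s, hs⟩, hyx⟩
    have key : b * y * a = a := by
      rw [hs, ← mul_assoc, hb1]
    have hax : a * x = b * x := by
      conv_rhs => rw [← hyx]
      rw [show y * a * x = (y * a) * x from rfl, ← mul_assoc, ← mul_assoc, key]
    refine ⟨?_, hax⟩
    calc x * a = x * a * x * a := by rw [ha2]
      _ = x * (a * x) * a := by rw [mul_assoc x a x]
      _ = x * star (a * x) * a := by rw [ha3]
      _ = x * (star x * star a) * a := by rw [star_mul]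
      _ = x * star x * star a * a := by rw [← mul_assoc x (star x) (star a)]
      _ = x * star x * (star a * a) := mul_assoc _ _ _
      _ = x * star x * (star a * b) := by rw [hsa]
      _ = x * star x * star a * b := (mul_assoc _ _ _).symm
      _ = x * (star x * star a) * b := by rw [mul_assoc x (star x) (star a)]
      _ = x * star (a * x) * b := by rw [← star_mul]
      _ = x * (a * x) * b := by rw [ha3]
      _ = x * a * x * b := by rw [← mul_assoc x a x]
      _ = x * b := by rw [ha2]
end

section
/- Let R be a unital ring with involution, let a, b ∈ R, let x be a core inverse of a and y a core inverse of b. Then a is below b in the core partial order (i.e. x a = x b and a x = b x) if and only if a is below b in the left star partial order (a* a = a* b and there exists s ∈ R with a = b s) and y a y = x. -/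
theorem core_le_iff_leftstar_and_yay {R : Type*} [Ring R] [StarRing R] (a b x y : R)
    (hx : IsCoreInverse a x) (hy : IsCoreInverse b y) :
    (x * a = x * b ∧ a * x = b * x) ↔
      ((star a * a = star a * b ∧ ∃ s : R, a = b * s) ∧ y * a * y = x) := by
  obtain ⟨ha1, ha2, ha3, ha4, ha5⟩ := hx
  obtain ⟨hb1, hb2, hb3, hb4, hb5⟩ := hy
  rw [sq] at ha4 ha5 hb4 hb5
  constructor
  · rintro ⟨h1, h2⟩
    -- a = b x a
    have habx : a = b * x * a := by rw [← h2, ha1]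
    -- x = b x²
    have hxbb : b * (x * x) = x := by
      calc b * (x * x) = b * x * x := by simp only [mul_assoc]
        _ = b * x * (a * (x * x)) := by rw [ha5]
        _ = b * x * a * (x * x) := by simp only [mul_assoc]
        _ = a * (x * x) := by rw [← habx]
        _ = x := ha5
    -- y b x = x
    have hybx : y * (b * x) = x := by
      calc y * (b * x) = y * (b * (b * (x * x))) := by rw [hxbb]
        _ = y * (b * b) * (x * x) := by simp only [mul_assoc]
        _ = b * (x * x) := by rw [hb4]
        _ = x := hxbb
    -- a = a x b
    have haxb : a = a * (x * b) := by
      calc a = a * x * a := ha1.symm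
        _ = a * (x * a) := by simp only [mul_assoc]
        _ = a * (x * b) := by rw [h1]
    -- a y = a x
    have h3 : a * y = a * x * (b * y) := by
      calc a * y = a * (x * b) * y := by rw [← haxb]
        _ = a * x * (b * y) := by simp only [mul_assoc]
    have h4 : star (a * y) = a * x := by
      rw [h3, star_mul (a * x) (b * y), hb3, ha3, h2]
      calc b * y * (b * x) = b * y * b * x := by simp only [mul_assoc]
        _ = b * x := by rw [hb1]
    have hay : a * y = a * x := by
      rw [← star_star (a * y), h4, ha3]
    -- y a y = x
    have hyay : y * a * y = x := by
      calc y * a * y = y * (b * x * a) * y := by rw [← habx]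
        _ = y * (b * x) * (a * y) := by simp only [mul_assoc]
        _ = x * (a * y) := by rw [hybx]
        _ = x * (a * x) := by rw [hay]
        _ = x * a * x := by simp only [mul_assoc]
        _ = x := ha2
    -- star a = star a * (a x)
    have ha' : star a = star a * (a * x) := by
      conv_lhs => rw [← ha1]
      rw [star_mul (a * x) a, ha3]
    have hstar : star a * a = star a * b := by
      calc star a * a = star a * (a * x) * a := by rw [← ha']
        _ = star a * a * (x * a) := by simp only [mul_assoc]
        _ = star a * a * (x * b) := by rw [h1]
        _ = star a * (a * x) * b := by simp only [mul_assoc]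
        _ = star a * b := by rw [← ha']
    have hbxa : b * (x * a) = a := by
      calc b * (x * a) = b * x * a := by simp only [mul_assoc]
        _ = a * x * a := by rw [← h2]
        _ = a := ha1
    exact ⟨⟨hstar, ⟨x * a, hbxa.symm⟩⟩, hyay⟩
  · rintro ⟨⟨hs1, s, hs2⟩, hyx⟩
    -- b y a = a
    have hq : b * y * a = a := by
      calc b * y * a = b * y * (b * s) := by rw [hs2]
        _ = b * y * b * s := by simp only [mul_assoc]
        _ = b * s := by rw [hb1]
        _ = a := hs2.symm
    -- b x = a y
    have hbx : b * x = a * y := by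
      calc b * x = b * (y * a * y) := by rw [hyx]
        _ = b * y * a * y := by simp only [mul_assoc]
        _ = a * y := by rw [hq]
    -- star a * (b y) = star a
    have hstq : star a * (b * y) = star a := by
      conv_rhs => rw [← hq]
      rw [star_mul (b * y) a, hb3]
    -- star a * (a y) = star a
    have hat : star a * (a * y) = star a := by
      calc star a * (a * y) = star a * a * y := by simp only [mul_assoc]
        _ = star a * b * y := by rw [hs1]
        _ = star a * (b * y) := by simp only [mul_assoc]
        _ = star a := hstq
    -- star (a y) * a = a
    have hta : star (a * y) * a = a := by
      have h := congrArg star hat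
      rw [star_mul (star a) (a * y), star_star] at h
      exact h
    have h5 : star (a * y) * (a * y) = a * y := by
      calc star (a * y) * (a * y) = star (a * y) * a * y := by simp only [mul_assoc]
        _ = a * y := by rw [hta]
    have h6 : star (a * y) = a * y := by
      conv_lhs => rw [← h5]
      rw [star_mul (star (a * y)) (a * y), star_star, h5]
    have hidem : a * y * (a * y) = a * y := by
      calc a * y * (a * y) = star (a * y) * (a * y) := by rw [h6]
        _ = a * y := h5
    -- a x = b x
    have goal2 : a * x = b * x := by
      calc a * x = a * (y * a * y) := by rw [hyx]
        _ = a * y * (a * y) := by simp only [mul_assoc]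
        _ = a * y := hidem
        _ = b * x := hbx.symm
    -- x = x * (x* a*)
    have hx' : x * (star x * star a) = x := by
      calc x * (star x * star a) = x * star (a * x) := by rw [star_mul a x]
        _ = x * (a * x) := by rw [ha3]
        _ = x * a * x := by simp only [mul_assoc]
        _ = x := ha2
    have goal1 : x * a = x * b := by
      calc x * a = x * (star x * star a) * a := by rw [hx']
        _ = x * (star x * (star a * a)) := by simp only [mul_assoc]
        _ = x * (star x * (star a * b)) := by rw [hs1]
        _ = x * (star x * star a) * b := by simp only [mul_assoc]
        _ = x * b := by rw [hx']
    exact ⟨goal1, goal2⟩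
end

section
/- Let R be a unital ring with involution, let a, b ∈ R, and let x be a core inverse of a. Then a is below b in the core partial order (i.e. x a = x b and a x = b x) if and only if a is below b in the right sharp partial order (a² = b a and there exists t ∈ R with a = t b) and b x b = a. -/
theorem core_le_iff_rightsharp_and_bxb {R : Type*} [Ring R] [StarRing R] (a b x : R)
    (hx : IsCoreInverse a x) :
    (x * a = x * b ∧ a * x = b * x) ↔
      ((a ^ 2 = b * a ∧ ∃ t : R, a = t * b) ∧ b * x * b = a) := by
  obtain ⟨h1, h2, h3, h4, h5⟩ := hx
  rw [pow_two] at h4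
  rw [pow_two] at h5
  constructor
  · rintro ⟨hxa, hax⟩
    refine ⟨⟨?_, a * x, ?_⟩, ?_⟩
    · calc a ^ 2 = a * a := sq a
        _ = (a * x * a) * a := by rw [h1]
        _ = a * x * (a * a) := by rw [mul_assoc]
        _ = b * x * (a * a) := by rw [hax]
        _ = b * (x * (a * a)) := by rw [mul_assoc]
        _ = b * a := by rw [h4]
    · calc a = a * x * a := h1.symm
        _ = a * (x * a) := by rw [mul_assoc]
        _ = a * (x * b) := by rw [hxa]
        _ = a * x * b := by rw [mul_assoc]
    · calc b * x * b = a * x * b := by rw [hax]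
        _ = a * (x * b) := by rw [mul_assoc]
        _ = a * (x * a) := by rw [hxa]
        _ = a * x * a := by rw [mul_assoc]
        _ = a := h1
  · rintro ⟨⟨hsq, t, ht⟩, hb⟩
    rw [pow_two] at hsq
    have hax : a * x = b * x := by
      calc a * x = a * (a * (x * x)) := by rw [h5]
        _ = a * a * (x * x) := by rw [mul_assoc]
        _ = b * a * (x * x) := by rw [← hsq]
        _ = b * (a * (x * x)) := by rw [mul_assoc]
        _ = b * x := by rw [h5]
    refine ⟨?_, hax⟩
    calc x * a = x * (b * x * b) := by rw [hb]
      _ = x * (b * x) * b := by noncomm_ring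
      _ = x * (a * x) * b := by rw [hax]
      _ = (x * a * x) * b := by noncomm_ring
      _ = x * b := by rw [h2]
end

section
/- Let R be a unital ring with involution, let a, b ∈ R, let x be a core inverse of a and y a core inverse of b. Then a is below b in the core partial order (i.e. x a = x b and a x = b x) if and only if a is below b in the right sharp partial order (a² = b a and there exists t ∈ R with a = t b) and x a y = x. -/
theorem core_le_iff_rightsharp_and_xay {R : Type*} [Ring R] [StarRing R] (a b x y : R)
    (hx : IsCoreInverse a x) (hy : IsCoreInverse b y) :
    (x * a = x * b ∧ a * x = b * x) ↔
      ((a ^ 2 = b * a ∧ ∃ t : R, a = t * b) ∧ x * a * y = x) := by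
  obtain ⟨ha1, ha2, ha3, ha4, ha5⟩ := hx
  obtain ⟨hb1, hb2, hb3, hb4, hb5⟩ := hy
  constructor
  · rintro ⟨hxa, hax⟩
    have hba : a ^ 2 = b * a := by
      calc a ^ 2 = a * x * a * a := by rw [ha1, pow_two]
        _ = a * x * a ^ 2 := by noncomm_ring
        _ = b * x * a ^ 2 := by rw [hax]
        _ = b * (x * a ^ 2) := by noncomm_ring
        _ = b * a := by rw [ha4]
    have hbx : b * x = a * x := hax.symm
    have hbxstar : star (b * x) = b * x := by rw [hbx]; exact ha3
    have hxx : x = x * star x * star b := by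
      calc x = x * a * x := ha2.symm
        _ = x * (a * x) := by noncomm_ring
        _ = x * (b * x) := by rw [hax]
        _ = x * star (b * x) := by rw [hbxstar]
        _ = x * (star x * star b) := by rw [star_mul]
        _ = x * star x * star b := by noncomm_ring
    have hsb : star b * (b * y) = star b := by
      calc star b * (b * y) = star b * star (b * y) := by rw [hb3]
        _ = star (b * y * b) := (star_mul _ _).symm
        _ = star b := by rw [hb1]
    refine ⟨⟨hba, ⟨a * x, ?_⟩⟩, ?_⟩
    · calc a = a * x * a := ha1.symm
        _ = a * (x * a) := by noncomm_ring
        _ = a * (x * b) := by rw [hxa]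
        _ = a * x * b := by noncomm_ring
    · calc x * a * y = x * b * y := by rw [hxa]
        _ = x * star x * star b * b * y := by nth_rewrite 1 [hxx]; noncomm_ring
        _ = x * star x * (star b * (b * y)) := by noncomm_ring
        _ = x * star x * star b := by rw [hsb]
        _ = x := hxx.symm
  · rintro ⟨⟨hba, ⟨t, ht⟩⟩, hxay⟩
    constructor
    · have : x * b = x * a := by
        calc x * b = x * a * y * b := by nth_rewrite 1 [← hxay]; noncomm_ring
          _ = x * (t * b) * y * b := by rw [ht]
          _ = x * t * (b * y * b) := by noncomm_ring
          _ = x * t * b := by rw [hb1]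
          _ = x * (t * b) := by noncomm_ring
          _ = x * a := by rw [← ht]
      exact this.symm
    · have : b * x = a * x := by
        calc b * x = b * (a * x ^ 2) := by rw [ha5]
          _ = b * a * x ^ 2 := by noncomm_ring
          _ = a ^ 2 * x ^ 2 := by rw [← hba]
          _ = a * (a * x ^ 2) := by noncomm_ring
          _ = a * x := by rw [ha5]
      exact this.symm
end

section
/- Let R be a unital ring with involution, let a, b ∈ R, and suppose a is EP witnessed by x, i.e. a x a = a, x a x = x, a x = x a, and (a x)* = a x (so that x is simultaneously the core, group, and Moore–Penrose inverse of a). Then a is below b in the core partial order (x a = x b and a x = b x) if and only if a is below b in the star partial order (a* a = a* b and a a* = b a*). -/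
theorem core_le_iff_star_le_of_EP {R : Type*} [Ring R] [StarRing R] (a b x : R)
    (h1 : a * x * a = a) (h2 : x * a * x = x) (h3 : a * x = x * a)
    (h4 : star (a * x) = a * x) :
    (x * a = x * b ∧ a * x = b * x) ↔
      (star a * a = star a * b ∧ a * star a = b * star a) := by
  have hax : star (x * a) = x * a := by rw [← h3, h4]
  have k1 : star a * star x = x * a := by rw [← star_mul, hax]
  have k2 : star x * star a = a * x := by rw [← star_mul, h4]
  have key1 : x * (star x * star a) = x := by rw [k2, ← mul_assoc, h2]
  have key2 : (star a * star x) * x = x := by rw [k1, h2]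
  constructor
  · rintro ⟨e1, e2⟩
    constructor
    · calc star a * a = star a * (a * x * a) := by rw [h1]
        _ = (star a * a) * (x * a) := by simp [mul_assoc]
        _ = (star a * a) * (x * b) := by rw [e1]
        _ = (star a * (a * x)) * b := by simp [mul_assoc]
        _ = (star a * star (a * x)) * b := by rw [h4]
        _ = star (a * x * a) * b := by
              rw [show star (a * x * a) = star a * star (a * x) from star_mul _ _]
        _ = star a * b := by rw [h1]
    · calc a * star a = (a * x * a) * star a := by rw [h1]
        _ = (a * x) * (a * star a) := by simp [mul_assoc]
        _ = (b * x) * (a * star a) := by rw [e2]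
        _ = b * ((x * a) * star a) := by simp [mul_assoc]
        _ = b * ((a * x) * star a) := by rw [h3]
        _ = b * star (a * (a * x)) := by rw [star_mul, h4]
        _ = b * star a := by rw [show a * (a * x) = a from by rw [h3, ← mul_assoc, h1]]
  · rintro ⟨f1, f2⟩
    constructor
    · calc x * a = (x * (star x * star a)) * a := by rw [key1]
        _ = x * star x * (star a * a) := by simp [mul_assoc]
        _ = x * star x * (star a * b) := by rw [f1]
        _ = (x * (star x * star a)) * b := by simp [mul_assoc]
        _ = x * b := by rw [key1]
    · calc a * x = a * ((star a * star x) * x) := by rw [key2]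
        _ = (a * star a) * (star x * x) := by simp [mul_assoc]
        _ = (b * star a) * (star x * x) := by rw [f2]
        _ = b * ((star a * star x) * x) := by simp [mul_assoc]
        _ = b * x := by rw [key2]
end
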